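/- arXiv:math/0501205 — 6 statements merged into one kernel-verified Lean document; each statement's English description precedes it below -/
import Mathlib

section
/- Let T be ergodic on (M, μ) and x₀ ∈ M. Suppose there exists η > 0 such that for every nonincreasing sequence (r_n) with ∑ μ(B(x₀,r_n)) = ∞ one has μ(⋃_{n≥0} T^{-n}B(x₀,r_n)) ≥ η. Then for every nonincreasing sequence (r_n) with ∑ μ(B(x₀,r_n)) = ∞, the limsup set limsup T^{-n}B(x₀,r_n) has full measure. -/
open MeasureTheory Filter Metric ENNReal Topology

set_option maxHeartbeats 1000000 in
/-- Remark 1.3: a uniform lower bound on unions of preimages implies the MSTP at `x₀`. -/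
theorem stmt4 {M : Type*} [MetricSpace M] [MeasurableSpace M] [BorelSpace M]
    (μ : Measure M) [IsProbabilityMeasure μ] (T : M → M) (hT : Ergodic T μ) (x₀ : M)
    (hη : ∃ η : ℝ≥0∞, 0 < η ∧ ∀ r : ℕ → ℝ, Antitone r →
      (∑' n, μ (ball x₀ (r n)) = ⊤) → η ≤ μ (⋃ n, T^[n] ⁻¹' ball x₀ (r n))) :
    ∀ r : ℕ → ℝ, Antitone r → (∑' n, μ (ball x₀ (r n)) = ⊤) →
      μ {x | ∃ᶠ n in atTop, T^[n] x ∈ ball x₀ (r n)} = 1 := by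
  obtain ⟨η, hη0, hηall⟩ := hη
  intro r hr hsum
  have hTm : Measurable T := hT.measurable
  set A : ℕ → Set M := fun n => T^[n] ⁻¹' ball x₀ (r n) with hA
  have hAm : ∀ n, MeasurableSet (A n) := fun n =>
    (isOpen_ball.measurableSet).preimage (hTm.iterate n)
  set L : Set M := {x | ∃ᶠ n in atTop, T^[n] x ∈ ball x₀ (r n)} with hL
  -- L as a countable intersection of unions
  have hLeq : L = ⋂ N, ⋃ n, ⋃ (_ : N ≤ n), A n := by
    ext x
    simp only [hL, Set.mem_setOf_eq, frequently_atTop, Set.mem_iInter, Set.mem_iUnion, hA,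
      Set.mem_preimage]
    constructor
    · intro h N; obtain ⟨n, hn, hx⟩ := h N; exact ⟨n, hn, hx⟩
    · intro h N; obtain ⟨n, hn, hx⟩ := h N; exact ⟨n, hn, hx⟩
  have hLm : MeasurableSet L := by
    rw [hLeq]
    exact MeasurableSet.iInter fun N => MeasurableSet.iUnion fun n =>
      MeasurableSet.iUnion fun _ => hAm n
  -- lower bound for each tail union
  have htail : ∀ N : ℕ, η ≤ μ (⋃ n, ⋃ (_ : N ≤ n), A n) := by
    intro N
    set r' : ℕ → ℝ := fun k => r (k + N) with hr'
    have hr'anti : Antitone r' := fun a b hab => hr (by omega)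
    have hgen : ∀ m : ℕ, ∑' k, μ (ball x₀ (r (k + m))) = ⊤ := by
      intro m
      induction m with
      | zero => simpa using hsum
      | succ m ih =>
        have h1 := ENNReal.tsum_add_one_eq_top (f := fun k => μ (ball x₀ (r (k + m)))) ih
          (measure_ne_top μ _)
        simpa [show ∀ k : ℕ, k + (m + 1) = k + 1 + m from fun k => by omega] using h1
    have hsum' : ∑' k, μ (ball x₀ (r' k)) = ⊤ := hgen N
    have hkey := hηall r' hr'anti hsum'
    have hmp : MeasurePreserving (T^[N]) μ μ := hT.toMeasurePreserving.iterate N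
    have hset : T^[N] ⁻¹' (⋃ k, T^[k] ⁻¹' ball x₀ (r' k)) ⊆ ⋃ n, ⋃ (_ : N ≤ n), A n := by
      intro x hx
      simp only [Set.mem_preimage, Set.mem_iUnion] at hx ⊢
      obtain ⟨k, hk⟩ := hx
      refine ⟨k + N, by omega, ?_⟩
      simpa [hA, Function.iterate_add_apply] using hk
    calc η ≤ μ (⋃ k, T^[k] ⁻¹' ball x₀ (r' k)) := hkey
      _ = μ (T^[N] ⁻¹' (⋃ k, T^[k] ⁻¹' ball x₀ (r' k))) :=
          (hmp.measure_preimage (MeasurableSet.iUnion fun k =>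
            isOpen_ball.measurableSet.preimage (hTm.iterate k)).nullMeasurableSet).symm
      _ ≤ μ (⋃ n, ⋃ (_ : N ≤ n), A n) := measure_mono hset
  -- μ L ≥ η
  have hLlb : η ≤ μ L := by
    rw [hLeq]
    set U : ℕ → Set M := fun N => ⋃ n, ⋃ (_ : N ≤ n), A n with hU
    have hUanti : Antitone U := by
      intro a b hab
      exact Set.iUnion_mono fun n => Set.iUnion_subset fun h => Set.subset_iUnion_of_subset
        (le_trans hab h) (le_refl _)
    have := hUanti.directed_ge.measure_iInter
      (fun N => (MeasurableSet.iUnion fun n =>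
        MeasurableSet.iUnion fun _ => hAm n).nullMeasurableSet)
      ⟨0, measure_ne_top μ _⟩
    rw [this]
    exact le_iInf fun N => htail N
  -- L is (pointwise) a subset of T ⁻¹' L
  have hsub : L ⊆ T ⁻¹' L := by
    intro x hx
    simp only [hL, Set.mem_setOf_eq, frequently_atTop] at hx ⊢
    intro N
    obtain ⟨n, hn, hxn⟩ := hx (N + 1)
    refine ⟨n - 1, by omega, ?_⟩
    have h1 : T^[n - 1] (T x) = T^[n] x := by
      rw [← Function.iterate_succ_apply]
      congr 1
      omega
    rw [h1]
    exact ball_subset_ball (hr (by omega : n - 1 ≤ n)) hxn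
  have := hT.ae_empty_or_univ_of_ae_le_preimage hLm.nullMeasurableSet
    (HasSubset.Subset.eventuallyLE hsub)
  rcases this with h | h
  · exfalso
    have : μ L = 0 := by
      rw [show (0 : ℝ≥0∞) = μ (∅ : Set M) by simp]
      exact measure_congr h
    exact absurd (this ▸ hLlb) (by simpa using hη0.ne')
  · have : μ L = μ (Set.univ : Set M) := measure_congr h
    simpa using this
end

section
/- If α ∈ R^d has at least one irrational coordinate, then there exists a sequence of radii r_n ≥ 0 with ∑ r_n^d = ∞ such that for every x₀ ∈ T^d the set limsup_n T_α^{-n} B(x₀, r_n) is empty, where T_α is the translation by α on T^d. In particular, T_α does not have the shrinking target property. -/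
/-! The radii vanish except along a sparse sequence of times `f k`, where `r (f k) = ρ k` and
`∑ ρ k ^ d = ∞`. The orbit of the irrational coordinate `β = α i` is dense in the circle, so the
times can be chosen with `‖f k • β‖ ∈ (2 ρ k, 3 ρ k)`: at time `f k` every point has moved by more
than `2 ρ k` but less than `3 ρ k` in coordinate `i`. A hit of `B(x₀, ρ k)` at time `f k` therefore
forces `ρ k < dist (x i) (x₀ i) < 4 ρ k`, which for a fixed `x` and `ρ → 0` happens for only
finitely many `k`. -/

open Filter Metric Topology Function Set

theorem AddCircle.denseRange_nsmul_coe_of_irrational {β : ℝ} (hβ : Irrational β) :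
    DenseRange fun n : ℕ => n • (β : AddCircle (1 : ℝ)) := by
  rw [← denseRange_zsmul_iff_nsmul, AddCircle.denseRange_zsmul_coe_iff, div_one]
  exact hβ

theorem DenseRange.frequently_nsmul_mem {G : Type*} [AddGroup G] [TopologicalSpace G]
    [ContinuousAdd G] {b : G} (hb : DenseRange fun n : ℕ => n • b) {U : Set G}
    (hU : IsOpen U) (hUne : U.Nonempty) : ∃ᶠ n : ℕ in atTop, n • b ∈ U := by
  refine frequently_atTop.2 fun N => ?_
  obtain ⟨u, hu⟩ := hUne
  obtain ⟨m, hm⟩ := hb.exists_mem_open (hU.preimage (continuous_add_const (N • b)))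
    ⟨u - N • b, by simpa using hu⟩
  exact ⟨m + N, le_add_self, by rwa [add_nsmul]⟩

theorem AddCircle.exists_strictMono_norm_nsmul_mem_Ioo {β : ℝ} (hβ : Irrational β)
    {ρ : ℕ → ℝ} (hρ : ∀ k, 0 < ρ k ∧ ρ k ≤ 1 / 5) :
    ∃ f : ℕ → ℕ, StrictMono f ∧
      ∀ k, ‖f k • (β : AddCircle (1 : ℝ))‖ ∈ Ioo (2 * ρ k) (3 * ρ k) := by
  refine extraction_forall_of_frequently
    (P := fun k n => ‖n • (β : AddCircle (1 : ℝ))‖ ∈ Ioo (2 * ρ k) (3 * ρ k)) fun k => ?_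
  refine (denseRange_nsmul_coe_of_irrational hβ).frequently_nsmul_mem
    (isOpen_Ioo.preimage continuous_norm) ⟨(5 / 2 * ρ k : ℝ), ?_⟩
  obtain ⟨hpos, hle⟩ := hρ k
  have hnorm : ‖((5 / 2 * ρ k : ℝ) : AddCircle (1 : ℝ))‖ = 5 / 2 * ρ k := by
    rw [(AddCircle.norm_coe_eq_abs_iff 1 one_ne_zero).2, abs_of_pos (by positivity)]
    rw [abs_one, abs_of_pos (by positivity)]
    linarith
  rw [mem_preimage, hnorm]
  constructor <;> linarith

theorem finite_setOf_mem_Ioo_four_mul {ρ : ℕ → ℝ} (hρ : Tendsto ρ atTop (𝓝 0)) (c : ℝ) :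
    {k | c ∈ Ioo (ρ k) (4 * ρ k)}.Finite := by
  rw [← Set.not_infinite, ← Nat.frequently_atTop_iff_infinite, not_frequently]
  rcases le_or_gt c 0 with hc | hc
  · exact Eventually.of_forall fun k ⟨h₁, h₂⟩ => by linarith
  · filter_upwards [(hρ.const_mul 4).eventually (gt_mem_nhds (by rwa [mul_zero]))]
      with k hk ⟨_, h⟩
    linarith

theorem finite_setOf_dist_add_nsmul_lt_extend {G : Type*} [SeminormedAddCommGroup G] {b : G}
    {ρ : ℕ → ℝ} (hρ : Tendsto ρ atTop (𝓝 0)) {f : ℕ → ℕ} (hf : Injective f)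
    (hfb : ∀ k, ‖f k • b‖ ∈ Ioo (2 * ρ k) (3 * ρ k)) (x x₀ : G) :
    {n | dist (x + n • b) x₀ < extend f ρ 0 n}.Finite := by
  refine ((finite_setOf_mem_Ioo_four_mul hρ (dist x x₀)).image f).subset fun n hn => ?_
  by_cases hn' : ∃ k, f k = n
  · obtain ⟨k, rfl⟩ := hn'
    rw [mem_ofPred_eq, hf.extend_apply] at hn
    have htri := abs_dist_sub_le (x + f k • b) x₀ x
    rw [dist_self_add_left, dist_comm x₀, abs_le] at htri
    obtain ⟨h₂, h₃⟩ := hfb k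
    exact mem_image_of_mem f ⟨by linarith, by linarith⟩
  · rw [mem_ofPred_eq, extend_apply' _ _ _ hn'] at hn
    exact absurd hn (not_lt.2 dist_nonneg)

theorem exists_tendsto_zero_not_summable_pow {d : ℕ} (hd : 0 < d) :
    ∃ ρ : ℕ → ℝ, (∀ k, 0 < ρ k ∧ ρ k ≤ 1 / 5) ∧ Tendsto ρ atTop (𝓝 0) ∧
      ¬Summable fun k => ρ k ^ d := by
  refine ⟨fun k => ((k : ℝ) + 1) ^ (-(d : ℝ)⁻¹) / 5, fun k => ⟨by positivity, ?_⟩, ?_, ?_⟩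
  · exact div_le_div_of_nonneg_right
      (Real.rpow_le_one_of_one_le_of_nonpos (by simp) (by simp)) (by norm_num)
  · have := (tendsto_rpow_neg_atTop (y := (d : ℝ)⁻¹) (by positivity)).comp
      (tendsto_atTop_add_const_right atTop 1 tendsto_natCast_atTop_atTop)
    simpa using this.div_const 5
  · have hpow : ∀ k : ℕ, (((k : ℝ) + 1) ^ (-(d : ℝ)⁻¹) / 5) ^ d = ((k + 1 : ℕ) : ℝ)⁻¹ / 5 ^ d :=
      fun k => by
        rw [div_pow, Real.rpow_neg (by positivity), inv_pow,
          Real.rpow_inv_natCast_pow (by positivity) hd.ne', Nat.cast_succ]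
    simp_rw [hpow, summable_div_const_iff (by positivity : (5 : ℝ) ^ d ≠ 0)]
    exact mt (summable_nat_add_iff (f := fun n : ℕ => (n : ℝ)⁻¹) 1).1 Real.not_summable_natCast_inv

theorem stmt5_general (d : ℕ) (α : Fin d → ℝ) (hα : ∃ i, Irrational (α i)) :
    ∃ r : ℕ → ℝ, (∀ n, 0 ≤ r n) ∧ ¬ Summable (fun n => r n ^ d) ∧
      ∀ x₀ : Fin d → AddCircle (1:ℝ),
        {x : Fin d → AddCircle (1:ℝ) | ∃ᶠ n in atTop,
          (fun y => y + fun i => ((α i : ℝ) : AddCircle (1:ℝ)))^[n] x ∈ ball x₀ (r n)} = ∅ := by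
  obtain ⟨i, hi⟩ := hα
  obtain ⟨ρ, hρ, hρ0, hρsum⟩ := exists_tendsto_zero_not_summable_pow i.pos
  obtain ⟨f, hf, hfb⟩ := AddCircle.exists_strictMono_norm_nsmul_mem_Ioo hi hρ
  refine ⟨extend f ρ 0, fun n => ?_, ?_, fun x₀ => eq_empty_iff_forall_notMem.2 fun x hx => ?_⟩
  · by_cases hn : ∃ k, f k = n
    · obtain ⟨k, rfl⟩ := hn
      exact hf.injective.extend_apply ρ 0 k ▸ (hρ k).1.le
    · exact (extend_apply' ρ (0 : ℕ → ℝ) n hn).ge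
  · have hcomp : (fun n => extend f ρ 0 n ^ d) ∘ f = fun k => ρ k ^ d :=
      funext fun k => by rw [comp_apply, hf.injective.extend_apply]
    rwa [← hf.injective.summable_iff fun n hn => by
      rw [extend_apply' _ _ _ hn, Pi.zero_apply, zero_pow i.pos.ne'], hcomp]
  · rw [mem_ofPred_eq, Nat.frequently_atTop_iff_infinite] at hx
    refine hx ((finite_setOf_dist_add_nsmul_lt_extend hρ0 hf.injective hfb (x i) (x₀ i)).subset
      fun n hn => ?_)
    rw [mem_ofPred_eq, add_right_iterate_apply, mem_ball] at hn
    exact (dist_le_pi_dist _ _ i).trans_lt hn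

/-- If `α` has an irrational coordinate, there are radii with `∑ rₙ^d = ∞` whose limsup
target set for the translation `T_α` is empty, for every center `x₀`. -/
theorem stmt5 (d : ℕ) (hd : 0 < d) (α : Fin d → ℝ) (hα : ∃ i, Irrational (α i)) :
    ∃ r : ℕ → ℝ, (∀ n, 0 ≤ r n) ∧ ¬ Summable (fun n => r n ^ d) ∧
      ∀ x₀ : Fin d → AddCircle (1:ℝ),
        {x : Fin d → AddCircle (1:ℝ) | ∃ᶠ n in atTop,
          (fun y => y + fun i => ((α i : ℝ) : AddCircle (1:ℝ)))^[n] x ∈ ball x₀ (r n)} = ∅ :=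
  stmt5_general d α hα
end

section
/- Let α ∈ R^d be a vector that is not of constant type, i.e., for every C > 0 there exists a nonzero integer Q with ‖Qα‖_Z < C |Q|^{-1/d}. Then the translation T_α on T^d does not have the monotone shrinking target property: for any x₀ ∈ T^d there exists a nonincreasing sequence (r_n) with ∑ r_n^d = ∞ such that μ(limsup T_α^{-n} B(x₀, r_n)) = 0. -/
/-!
If `α` is not of constant type, there are `Q` with `‖Qα‖_ℤ` as small as we like compared with
`Q^{-1/d}`. Then over a block of `L ≈ r^{-d}` consecutive times the orbit drifts so little in
multiples of `Q` steps that every visit to `B(x₀, r)` is shadowed, within `r`, by one of the first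
`Q` times of the block: the points hitting the target during the block lie in `Q` balls of
radius `2r`, of total measure `≲ Q r^d`, while the block contributes `L r^d ≥ 1` to `∑ r_n^d`.
Concatenating blocks with `Q r^d ≤ 2^{-k}` and decreasing `r` gives a divergent series whose
limsup set is null by Borel–Cantelli.
-/

open MeasureTheory Filter Metric ENNReal Topology

/-- `‖v‖_ℤ`: the maximum over coordinates of the distance of `v i` to the nearest integer,
realized as the sup-distance to `0` in the torus `ℝ^d/ℤ^d`. -/
noncomputable def normZ {d : ℕ} (v : Fin d → ℝ) : ℝ :=
  dist (fun i => ((v i : ℝ) : AddCircle (1:ℝ))) (0 : Fin d → AddCircle (1:ℝ))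

section Blocks

variable (L : ℕ → ℕ)

-- Times `n` with `blockStart L k ≤ n < blockStart L (k + 1)` form the `k`-th block.
def blockStart (K : ℕ) : ℕ := ∑ k ∈ Finset.range K, L k

def blockIndex (n : ℕ) : ℕ := Nat.findGreatest (fun k => blockStart L k ≤ n) n

lemma blockStart_succ (K : ℕ) : blockStart L (K + 1) = blockStart L K + L K :=
  Finset.sum_range_succ _ _

lemma blockStart_mono : Monotone (blockStart L) := fun _ _ h =>
  Finset.sum_le_sum_of_subset (Finset.range_mono h)

lemma blockStart_blockIndex_le (n : ℕ) : blockStart L (blockIndex L n) ≤ n :=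
  Nat.findGreatest_spec (P := fun k => blockStart L k ≤ n) n.zero_le (by simp [blockStart])

lemma blockIndex_mono : Monotone (blockIndex L) := fun _ _ hmn =>
  Nat.findGreatest_mono (fun _ hk => hk.trans hmn) hmn

variable {L}

lemma le_blockStart (hL : ∀ k, 0 < L k) (K : ℕ) : K ≤ blockStart L K := by
  simpa [blockStart] using Finset.card_nsmul_le_sum (Finset.range K) L 1 fun k _ => hL k

lemma le_blockIndex_iff (hL : ∀ k, 0 < L k) {K n : ℕ} :
    K ≤ blockIndex L n ↔ blockStart L K ≤ n :=
  ⟨fun h => (blockStart_mono L h).trans (blockStart_blockIndex_le L n),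
    fun h => Nat.le_findGreatest ((le_blockStart hL K).trans h) h⟩

lemma blockIndex_eq (hL : ∀ k, 0 < L k) {k n : ℕ} (h₁ : blockStart L k ≤ n)
    (h₂ : n < blockStart L (k + 1)) : blockIndex L n = k := by
  refine le_antisymm (Nat.le_of_lt_succ ?_) ((le_blockIndex_iff hL).2 h₁)
  by_contra! h
  exact h₂.not_ge ((le_blockIndex_iff hL).1 h)

lemma lt_blockStart_blockIndex_succ (hL : ∀ k, 0 < L k) (n : ℕ) :
    n < blockStart L (blockIndex L n + 1) := by
  by_contra! h
  exact (blockIndex L n).lt_succ_self.not_ge ((le_blockIndex_iff hL).2 h)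

lemma sum_range_blockStart {M : Type*} [AddCommMonoid M] (hL : ∀ k, 0 < L k) (f : ℕ → M)
    (K : ℕ) :
    ∑ n ∈ Finset.range (blockStart L K), f (blockIndex L n) =
      ∑ k ∈ Finset.range K, L k • f k := by
  induction K with
  | zero => simp [blockStart]
  | succ K ih =>
    rw [blockStart_succ, Finset.sum_range_add, ih, Finset.sum_range_succ]
    congr 1
    calc ∑ j ∈ Finset.range (L K), f (blockIndex L (blockStart L K + j))
        = ∑ _j ∈ Finset.range (L K), f K := Finset.sum_congr rfl fun j hj => by
          rw [Finset.mem_range] at hj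
          rw [blockIndex_eq hL (k := K) (by omega) (by rw [blockStart_succ]; omega)]
      _ = L K • f K := by rw [Finset.sum_const, Finset.card_range]

theorem not_summable_comp_blockIndex {f : ℕ → ℝ} (hf : ∀ k, 0 ≤ f k)
    (hLf : ∀ k, 1 ≤ L k * f k) :
    ¬ Summable fun n => f (blockIndex L n) := by
  have hL : ∀ k, 0 < L k := fun k => Nat.pos_of_ne_zero fun h => by
    have := hLf k
    norm_num [h] at this
  intro hsum
  obtain ⟨K, hK⟩ := exists_nat_gt (∑' n, f (blockIndex L n))
  have hpartial : (K : ℝ) ≤ ∑ n ∈ Finset.range (blockStart L K), f (blockIndex L n) := by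
    rw [sum_range_blockStart hL]
    simpa using Finset.card_nsmul_le_sum (Finset.range K) (fun k => L k • f k) 1
      fun k _ => by simpa using hLf k
  exact hK.not_ge (hpartial.trans (hsum.sum_le_tsum _ fun n _ => hf _))

end Blocks

theorem exists_lt_add_nsmul_mem_ball_two_mul {G : Type*} [SeminormedAddCommGroup G]
    {c x x₀ : G} {Q L N n : ℕ} {r : ℝ} (hQ : 0 < Q) (hshadow : L * ‖Q • c‖ ≤ Q * r)
    (hNn : N ≤ n) (hnL : n < N + L) (hx : x + n • c ∈ ball x₀ r) :
    ∃ b < Q, x + (N + b) • c ∈ ball x₀ (2 * r) := by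
  obtain ⟨a, b, hb, rfl⟩ : ∃ a b, b < Q ∧ n = N + b + a * Q :=
    ⟨(n - N) / Q, (n - N) % Q, Nat.mod_lt _ hQ, by have := Nat.div_add_mod' (n - N) Q; omega⟩
  have hdrift : ‖(a * Q) • c‖ ≤ r := by
    have hQ' : (0 : ℝ) < Q := by exact_mod_cast hQ
    have haQ : ((a * Q : ℕ) : ℝ) ≤ L := by exact_mod_cast (by omega : a * Q ≤ L)
    rw [mul_comm, mul_nsmul]
    refine norm_nsmul_le.trans (le_of_mul_le_mul_right ?_ hQ')
    calc a * ‖Q • c‖ * Q = ((a * Q : ℕ) : ℝ) * ‖Q • c‖ := by push_cast; ring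
      _ ≤ L * ‖Q • c‖ := by gcongr
      _ ≤ r * Q := by linarith
  refine ⟨b, hb, ?_⟩
  rw [mem_ball] at hx ⊢
  calc dist (x + (N + b) • c) x₀
      ≤ dist (x + (N + b) • c) (x + (N + b + a * Q) • c) +
          dist (x + (N + b + a * Q) • c) x₀ := dist_triangle _ _ _
    _ < r + r := by
      refine add_lt_add_of_le_of_lt ?_ hx
      rwa [add_nsmul _ _ (a * Q), ← add_assoc, dist_self_add_right]
    _ = 2 * r := by ring

theorem volume_ball_pi_addCircle_le {ι : Type*} [Fintype ι] {T : ℝ} [Fact (0 < T)]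
    (x : ι → AddCircle T) {r : ℝ} (hr : 0 < r) :
    volume (ball x r) ≤ ENNReal.ofReal (2 * r) ^ Fintype.card ι := by
  rw [ball_pi x hr, volume_pi_pi, ← Finset.card_univ, ← Finset.prod_const]
  refine Finset.prod_le_prod' fun i _ => ?_
  calc volume (ball (x i) r)
      ≤ volume (closedBall (x i) r) := measure_mono ball_subset_closedBall
    _ = ENNReal.ofReal (min T (2 * r)) := AddCircle.volume_closedBall (T := T) r
    _ ≤ ENNReal.ofReal (2 * r) := ENNReal.ofReal_le_ofReal (min_le_right _ _)

/-- A block of `L` times with target radius `r`: over it, multiples of `Q` steps drift by at most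
`r`, so its hits lie in `Q` balls of radius `2r`, of total measure at most `ε`. -/
structure IsShadowBlock {G : Type*} [SeminormedAddCommGroup G] (d : ℕ) (c : G) (ε : ℝ)
    (Q L : ℕ) (r : ℝ) : Prop where
  Q_pos : 0 < Q
  r_pos : 0 < r
  one_le_mul_pow : 1 ≤ L * r ^ d
  mul_pow_le : Q * (4 * r) ^ d ≤ ε
  shadow : L * ‖Q • c‖ ≤ Q * r

namespace IsShadowBlock

variable {G : Type*} [SeminormedAddCommGroup G] {d : ℕ} {c : G} {ε : ℝ} {Q L : ℕ} {r : ℝ}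

lemma L_pos (h : IsShadowBlock d c ε Q L r) : 0 < L :=
  Nat.pos_of_ne_zero fun hL => by
    have := h.one_le_mul_pow
    norm_num [hL] at this

lemma nonneg (h : IsShadowBlock d c ε Q L r) : 0 ≤ ε :=
  le_trans (by have := h.r_pos; positivity) h.mul_pow_le

end IsShadowBlock

theorem volume_setOf_frequently_mem_ball_blockIndex_eq_zero {d : ℕ} {T : ℝ} [Fact (0 < T)]
    (c x₀ : Fin d → AddCircle T) {ε : ℕ → ℝ} {Q L : ℕ → ℕ} {r : ℕ → ℝ} (hε : Summable ε)
    (hblock : ∀ k, IsShadowBlock d c (ε k) (Q k) (L k) (r k)) :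
    volume {x | ∃ᶠ n in atTop, x + n • c ∈ ball x₀ (r (blockIndex L n))} = 0 := by
  have hL : ∀ k, 0 < L k := fun k => (hblock k).L_pos
  let E : ℕ → Set (Fin d → AddCircle T) := fun k =>
    ⋃ b ∈ Finset.range (Q k), (· + (blockStart L k + b) • c) ⁻¹' ball x₀ (2 * r k)
  have hsub : {x | ∃ᶠ n in atTop, x + n • c ∈ ball x₀ (r (blockIndex L n))} ⊆
      {x | ∃ᶠ k in atTop, x ∈ E k} := by
    intro x hx
    rw [Set.mem_ofPred_eq, frequently_atTop] at hx ⊢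
    intro K
    obtain ⟨n, hKn, hxn⟩ := hx (blockStart L K)
    set k := blockIndex L n
    obtain ⟨b, hb, hxb⟩ := exists_lt_add_nsmul_mem_ball_two_mul (hblock k).Q_pos
      (hblock k).shadow (blockStart_blockIndex_le L n)
      (by simpa [blockStart_succ] using lt_blockStart_blockIndex_succ hL n) hxn
    exact ⟨k, (le_blockIndex_iff hL).2 hKn, Set.mem_biUnion (Finset.mem_range.2 hb) hxb⟩
  have hE : ∀ k, volume (E k) ≤ ENNReal.ofReal (ε k) := fun k => by
    have hr := (hblock k).r_pos
    calc volume (E k)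
        ≤ ∑ b ∈ Finset.range (Q k),
            volume ((· + (blockStart L k + b) • c) ⁻¹' ball x₀ (2 * r k)) :=
          measure_biUnion_finset_le _ _
      _ = Q k * volume (ball x₀ (2 * r k)) := by
          simp only [measure_preimage_add_right, Finset.sum_const, Finset.card_range, nsmul_eq_mul]
      _ ≤ Q k * ENNReal.ofReal (2 * (2 * r k)) ^ d := by
          gcongr
          simpa using volume_ball_pi_addCircle_le x₀ (by positivity : 0 < 2 * r k)
      _ = ENNReal.ofReal (Q k * (4 * r k) ^ d) := by
          rw [← ENNReal.ofReal_pow (by positivity), ← ENNReal.ofReal_natCast,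
            ← ENNReal.ofReal_mul (Nat.cast_nonneg _)]
          ring_nf
      _ ≤ ENNReal.ofReal (ε k) := ENNReal.ofReal_le_ofReal (hblock k).mul_pow_le
  refine measure_mono_null hsub (measure_setOfPred_frequently_eq_zero ?_)
  refine ne_top_of_le_ne_top ?_ (ENNReal.tsum_le_tsum hE)
  rw [← ENNReal.ofReal_tsum_of_nonneg (fun k => (hblock k).nonneg) hε]
  exact ENNReal.ofReal_ne_top

lemma exists_nat_one_le_mul_le_two {u : ℝ} (hu₀ : 0 < u) (hu₁ : u ≤ 1) :
    ∃ L : ℕ, 1 ≤ L * u ∧ L * u ≤ 2 := by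
  refine ⟨⌈u⁻¹⌉₊, ?_, ?_⟩
  · calc (1 : ℝ) = u⁻¹ * u := (inv_mul_cancel₀ hu₀.ne').symm
      _ ≤ ⌈u⁻¹⌉₊ * u := by gcongr; exact Nat.le_ceil _
  · calc ⌈u⁻¹⌉₊ * u ≤ (u⁻¹ + 1) * u := by
          gcongr; exact (Nat.ceil_lt_add_one (by positivity)).le
      _ = 1 + u := by field_simp
      _ ≤ 2 := by linarith

section Construction

variable {G : Type*} [SeminormedAddCommGroup G] {d : ℕ} {c : G}

def NotConstantType (d : ℕ) (c : G) : Prop :=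
  ∀ C : ℝ, 0 < C → ∃ Q : ℕ, 0 < Q ∧ ‖Q • c‖ < C * (Q : ℝ) ^ (-(1 : ℝ) / d)

lemma exists_shadow_radius (hd : 0 < d) (hc : NotConstantType d c)
    {ε ρ : ℝ} (hε₀ : 0 < ε) (hε₁ : ε ≤ 1) (hρ : 0 < ρ) :
    ∃ Q : ℕ, 0 < Q ∧ ∃ r : ℝ, 0 < r ∧ r ≤ ρ ∧ r ≤ 1 ∧ Q * (4 * r) ^ d ≤ ε ∧
      2 * ‖Q • c‖ ≤ Q * r ^ (d + 1) := by
  have hd' : (d : ℝ) ≠ 0 := by positivity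
  obtain ⟨Q, hQ, hQc⟩ := hc (min (ρ ^ (d + 1)) (ε * ε ^ (1 / d : ℝ) / 4 ^ (d + 1)) / 2)
    (by positivity)
  have hQ₁ : (1 : ℝ) ≤ Q := by exact_mod_cast hQ
  have hQ₀ : (0 : ℝ) < Q := by positivity
  have hQpow : (Q : ℝ) ^ (-(1 : ℝ) / d) ≤ 1 :=
    Real.rpow_le_one_of_one_le_of_nonpos hQ₁ (by rw [neg_div]; exact neg_nonpos.2 (by positivity))
  -- the largest radius allowed by `Q (4 s)^d ≤ ε`
  set s := (ε / Q) ^ (1 / d : ℝ) / 4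
  have hs₀ : 0 < s := by positivity
  have hs_pow : (4 * s) ^ d = ε / Q := by
    rw [mul_div_cancel₀ _ (by norm_num : (4 : ℝ) ≠ 0), ← Real.rpow_natCast,
      ← Real.rpow_mul (by positivity), one_div_mul_cancel hd', Real.rpow_one]
  have hs_succ :
      Q * s ^ (d + 1) = ε * ε ^ (1 / d : ℝ) / 4 ^ (d + 1) * (Q : ℝ) ^ (-(1 : ℝ) / d) := by
    have hs_d : s ^ d = ε / Q / 4 ^ d := by
      rw [_root_.eq_div_iff (by positivity), ← mul_pow, mul_comm, hs_pow]
    have hs_eq : s = ε ^ (1 / d : ℝ) / Q ^ (1 / d : ℝ) / 4 := by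
      simp only [s, Real.div_rpow hε₀.le hQ₀.le]
    rw [pow_succ, hs_d, hs_eq, neg_div, Real.rpow_neg hQ₀.le]
    field_simp
    ring
  have hs₁ : s ≤ 1 := by
    have : (ε / Q) ^ (1 / d : ℝ) ≤ 1 :=
      Real.rpow_le_one (by positivity) ((div_le_one hQ₀).2 (hε₁.trans hQ₁)) (by positivity)
    simp only [s]
    linarith
  refine ⟨Q, hQ, min ρ s, lt_min hρ hs₀, min_le_left _ _, (min_le_right _ _).trans hs₁, ?_, ?_⟩
  · calc Q * (4 * min ρ s) ^ d ≤ Q * (4 * s) ^ d := by gcongr; exact min_le_right _ _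
      _ = ε := by rw [hs_pow]; field_simp
  · have hQc' : 2 * ‖Q • c‖ ≤ min (ρ ^ (d + 1)) (ε * ε ^ (1 / d : ℝ) / 4 ^ (d + 1)) *
        (Q : ℝ) ^ (-(1 : ℝ) / d) := by linarith
    rcases min_choice ρ s with h | h <;> rw [h]
    · calc 2 * ‖Q • c‖ ≤ ρ ^ (d + 1) * 1 := hQc'.trans (by gcongr; exact min_le_left _ _)
        _ ≤ Q * ρ ^ (d + 1) := by
          rw [mul_one]; exact le_mul_of_one_le_left (by positivity) hQ₁
    · rw [hs_succ]
      exact hQc'.trans (by gcongr; exact min_le_right _ _)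

lemma exists_isShadowBlock (hd : 0 < d) (hc : NotConstantType d c)
    {ε ρ : ℝ} (hε₀ : 0 < ε) (hε₁ : ε ≤ 1) (hρ : 0 < ρ) :
    ∃ Q L : ℕ, ∃ r ≤ ρ, IsShadowBlock d c ε Q L r := by
  obtain ⟨Q, hQ, r, hr₀, hrρ, hr₁, hvol, hnorm⟩ := exists_shadow_radius hd hc hε₀ hε₁ hρ
  obtain ⟨L, hL₁, hL₂⟩ := exists_nat_one_le_mul_le_two (pow_pos hr₀ d) (pow_le_one₀ hr₀.le hr₁)
  refine ⟨Q, L, r, hrρ, hQ, hr₀, hL₁, hvol, ?_⟩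
  refine le_of_mul_le_mul_right ?_ (two_pos : (0 : ℝ) < 2)
  calc L * ‖Q • c‖ * 2 = L * (2 * ‖Q • c‖) := by ring
    _ ≤ L * (Q * r ^ (d + 1)) := by gcongr
    _ = (L * r ^ d) * (Q * r) := by ring
    _ ≤ 2 * (Q * r) := by gcongr
    _ = Q * r * 2 := by ring

lemma exists_antitone_isShadowBlock (hd : 0 < d) (hc : NotConstantType d c)
    {ε : ℕ → ℝ} (hε₀ : ∀ k, 0 < ε k) (hε₁ : ∀ k, ε k ≤ 1) :
    ∃ (Q L : ℕ → ℕ) (r : ℕ → ℝ), Antitone r ∧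
      ∀ k, IsShadowBlock d c (ε k) (Q k) (L k) (r k) := by
  have step : ∀ (k : ℕ) (ρ : {ρ : ℝ // 0 < ρ}), ∃ b : ℕ × ℕ × {r : ℝ // 0 < r},
      IsShadowBlock d c (ε k) b.1 b.2.1 b.2.2 ∧ (b.2.2 : ℝ) ≤ ρ := fun k ρ => by
    obtain ⟨Q, L, r, hrρ, hb⟩ := exists_isShadowBlock hd hc (hε₀ k) (hε₁ k) ρ.2
    exact ⟨(Q, L, ⟨r, hb.r_pos⟩), hb, hrρ⟩
  choose next hnext hle using step
  let ρ : ℕ → {ρ : ℝ // 0 < ρ} := fun k =>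
    Nat.rec ⟨1, one_pos⟩ (fun k ρk => (next k ρk).2.2) k
  exact ⟨fun k => (next k (ρ k)).1, fun k => (next k (ρ k)).2.1, fun k => (next k (ρ k)).2.2,
    antitone_nat_of_succ_le fun k => hle (k + 1) (ρ (k + 1)), fun k => hnext k (ρ k)⟩

end Construction

lemma normZ_intCast_mul {d : ℕ} (α : Fin d → ℝ) (Q : ℤ) :
    normZ (fun i => (Q : ℝ) * α i) = ‖Q • fun i => (α i : AddCircle (1 : ℝ))‖ := by
  rw [normZ, dist_zero_right]
  congr 1
  funext i
  rw [Pi.smul_apply, ← AddCircle.coe_zsmul, zsmul_eq_mul]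

/-- A translation by a vector not of constant type fails the monotone shrinking target
property. -/
theorem stmt6 (d : ℕ) (hd : 0 < d) (α : Fin d → ℝ)
    (hα : ∀ C : ℝ, 0 < C → ∃ Q : ℤ, Q ≠ 0 ∧
      normZ (fun i => (Q : ℝ) * α i) < C * |(Q : ℝ)| ^ (-(1:ℝ)/(d:ℝ)))
    (x₀ : Fin d → AddCircle (1:ℝ)) :
    ∃ r : ℕ → ℝ, Antitone r ∧ (∀ n, 0 ≤ r n) ∧ ¬ Summable (fun n => r n ^ d) ∧
      volume {x : Fin d → AddCircle (1:ℝ) | ∃ᶠ n in atTop,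
        (fun y => y + fun i => ((α i : ℝ) : AddCircle (1:ℝ)))^[n] x ∈ ball x₀ (r n)} = 0 := by
  set c : Fin d → AddCircle (1 : ℝ) := fun i => (α i : AddCircle (1 : ℝ))
  have hc : NotConstantType d c := by
    intro C hC
    obtain ⟨Q, hQ₀, hQ⟩ := hα C hC
    refine ⟨Q.natAbs, Int.natAbs_pos.2 hQ₀, ?_⟩
    rwa [norm_natAbs_smul, Nat.cast_natAbs, Int.cast_abs, ← normZ_intCast_mul]
  obtain ⟨Q, L, r, hr, hblock⟩ := exists_antitone_isShadowBlock hd hc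
    (ε := fun k => (1 / 2 : ℝ) ^ k) (fun k => by positivity)
    (fun k => pow_le_one₀ (by norm_num) (by norm_num))
  refine ⟨fun n => r (blockIndex L n), hr.comp_monotone (blockIndex_mono L),
    fun n => (hblock _).r_pos.le,
    not_summable_comp_blockIndex (fun k => pow_nonneg (hblock k).r_pos.le d)
      fun k => (hblock k).one_le_mul_pow, ?_⟩
  simp only [add_right_iterate_apply]
  exact volume_setOf_frequently_mem_ball_blockIndex_eq_zero c x₀ summable_geometric_two hblock
end

section
/- Let (T, M, μ) be a lightly mixing probability measure-preserving system, i.e., for all measurable sets A, B of positive measure, liminf_n μ(T^{-n}A ∩ B) > 0. Then every sequence (A_n) taking only finitely many distinct set values (possibly including measure-zero sets) and satisfying ∑ μ(A_n) = ∞ is Borel–Cantelli for T. -/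
open MeasureTheory Filter Metric ENNReal Topology

/-!
Divergence of `∑ μ (A n)` forces a single set `S` of positive measure to occur as `A n` for
all `n` in an infinite set `I`. By light mixing, `T^[n] ⁻¹' S` meets every set of positive
measure for all large `n`, so the measurable set of points whose orbit avoids `S` at every
time of `I` beyond `N` is null. Hence almost every orbit visits `S` at infinitely many times
of `I`.
-/

theorem exists_ne_zero_infinite_fiber_of_tsum_eq_top {ι α : Type*} {f : ι → α}
    (hf : (Set.range f).Finite) {g : α → ℝ≥0∞} (hg : ∀ a, g a ≠ ∞)
    (h : ∑' n, g (f n) = ∞) : ∃ a, g a ≠ 0 ∧ (f ⁻¹' {a}).Infinite := by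
  by_contra! hfib
  have hsupp : (Function.support (g ∘ f)).Finite := by
    rw [Function.support_comp_eq_preimage, ← Set.preimage_inter_range]
    exact (hf.subset Set.inter_subset_right).preimage' fun a ha => hfib a ha.1
  exact ENNReal.sum_ne_top.mpr (fun n _ => hg (f n))
    ((tsum_eq_sum' hsupp.coe_toFinset.ge).symm.trans h)

section

variable {M : Type*} [MeasurableSpace M]

def LightlyMixing (μ : Measure M) (T : M → M) : Prop :=
  ∀ A B : Set M, MeasurableSet A → MeasurableSet B → 0 < μ A → 0 < μ B →
    0 < liminf (fun n => μ ((T^[n]) ⁻¹' A ∩ B)) atTop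

namespace LightlyMixing

variable {μ : Measure M} {T : M → M} {A B : Set M}

theorem eventually_measure_preimage_inter_pos (hT : LightlyMixing μ T)
    (hA : MeasurableSet A) (hB : MeasurableSet B) (hA₀ : 0 < μ A) (hB₀ : 0 < μ B) :
    ∀ᶠ n in atTop, 0 < μ (T^[n] ⁻¹' A ∩ B) :=
  eventually_lt_of_lt_liminf (hT A B hA hB hA₀ hB₀)

theorem measure_eq_zero_of_frequently_disjoint (hT : LightlyMixing μ T)
    (hA : MeasurableSet A) (hB : MeasurableSet B) (hA₀ : 0 < μ A)
    (hdisj : ∃ᶠ n in atTop, Disjoint (T^[n] ⁻¹' A) B) : μ B = 0 := by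
  by_contra hB₀
  obtain ⟨n, hpos, hn⟩ := ((hT.eventually_measure_preimage_inter_pos hA hB hA₀
    (pos_iff_ne_zero.mpr hB₀)).and_frequently hdisj).exists
  simp [hn.inter_eq] at hpos

theorem ae_frequently_mem_iterate_preimage (hT : LightlyMixing μ T) (hTm : Measurable T)
    (hA : MeasurableSet A) (hA₀ : 0 < μ A) {I : Set ℕ} (hI : I.Infinite) :
    ∀ᵐ x ∂μ, ∃ᶠ n in atTop, n ∈ I ∧ T^[n] x ∈ A := by
  simp only [ae_iff, not_frequently, eventually_atTop, Set.ofPred_exists]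
  refine measure_iUnion_null fun N => ?_
  have hmeas : MeasurableSet {x | ∀ n, N ≤ n → ¬(n ∈ I ∧ T^[n] x ∈ A)} := by
    measurability
  refine hT.measure_eq_zero_of_frequently_disjoint hA hmeas hA₀ ?_
  refine ((Nat.frequently_atTop_iff_infinite.mpr hI).and_eventually (eventually_ge_atTop N)).mono ?_
  rintro n ⟨hnI, hNn⟩
  exact Set.disjoint_left.mpr fun x hx hxB => hxB n hNn ⟨hnI, hx⟩

end LightlyMixing

end

/-- In a lightly mixing system, every sequence taking finitely many distinct set values
with divergent measure sum is Borel–Cantelli. -/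
theorem stmt12 {M : Type*} [MeasurableSpace M] (μ : Measure M) [IsProbabilityMeasure μ]
    (T : M → M) (hT : MeasurePreserving T μ μ)
    (hlm : ∀ A B : Set M, MeasurableSet A → MeasurableSet B → 0 < μ A → 0 < μ B →
      0 < liminf (fun n => μ ((T^[n]) ⁻¹' A ∩ B)) atTop)
    (A : ℕ → Set M) (hA : ∀ n, MeasurableSet (A n)) (hfin : (Set.range A).Finite)
    (hdiv : ∑' n, μ (A n) = ⊤) :
    μ {x | ∃ᶠ n in atTop, T^[n] x ∈ A n} = 1 := by
  obtain ⟨S, hS₀, hSinf⟩ :=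
    exists_ne_zero_infinite_fiber_of_tsum_eq_top (g := fun s => μ s) hfin
      (fun _ => measure_ne_top μ _) hdiv
  obtain ⟨n₀, rfl⟩ := hSinf.nonempty
  have hmix : LightlyMixing μ T := hlm
  have hae := hmix.ae_frequently_mem_iterate_preimage hT.measurable (hA n₀)
    (pos_iff_ne_zero.mpr hS₀) hSinf
  have hBC : ∀ᵐ x ∂μ, ∃ᶠ n in atTop, T^[n] x ∈ A n :=
    hae.mono fun x hx => hx.mono fun n ⟨hn, hxn⟩ => hn ▸ hxn
  exact (measure_congr (ae_eq_univ.mpr hBC)).trans measure_univ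
end

section
/- Let α ∈ R^d with Q_n a sequence of positive integers satisfying Q_{n+1} ≥ 2Q_n and ‖Q_n α‖_Z ≤ 1/(n^{2d+3} Q_n^{1/d}) for all n ≥ 1. Set R_n = n^{-2} Q_n^{-1/d} and U_n = n^{2d} Q_n. Then for every x₀ ∈ T^d and every n ≥ 1: ⋃_{l=0}^{U_n−1} T_α^{-l} B(x₀, R_n) ⊆ ⋃_{l=0}^{Q_n−1} T_α^{-l} B(x₀, 2R_n), and consequently μ(⋃_{l=0}^{U_n−1} T_α^{-l} B(x₀, R_n)) ≤ C/n^{2d} for a constant C depending only on d. -/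
open MeasureTheory Filter Metric ENNReal Topology

open Set

theorem normZ_eq_norm {d : ℕ} (v : Fin d → ℝ) :
    normZ v = ‖fun i => (v i : AddCircle (1:ℝ))‖ :=
  dist_zero_right _

theorem norm_nsmul_coe_eq_normZ {d : ℕ} (q : ℕ) (α : Fin d → ℝ) :
    ‖q • fun i => (α i : AddCircle (1:ℝ))‖ = normZ (fun i => (q : ℝ) * α i) := by
  rw [normZ_eq_norm]
  congr 1
  funext i
  simp only [Pi.smul_apply, ← AddCircle.coe_nsmul, nsmul_eq_mul]

theorem biUnion_preimage_ball_iterate_add_subset {G : Type*} [SeminormedAddCommGroup G]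
    (c x : G) {K q : ℕ} (hq : 0 < q) {r : ℝ} (hr : K * ‖q • c‖ ≤ r) :
    (⋃ l ∈ Finset.range (K * q), (· + c)^[l] ⁻¹' ball x r) ⊆
      ⋃ l ∈ Finset.range q, (· + c)^[l] ⁻¹' ball x (2 * r) := by
  intro y hy
  simp only [mem_iUnion, Finset.mem_range, mem_preimage, add_right_iterate_apply,
    mem_ball, exists_prop] at hy ⊢
  obtain ⟨l, hl, hyl⟩ := hy
  refine ⟨l % q, Nat.mod_lt _ hq, ?_⟩
  have hdecomp : l • c = (l % q) • c + (l / q) • q • c := by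
    rw [← mul_nsmul', ← add_nsmul, Nat.mod_add_div']
  have hshift : dist (y + (l % q) • c) (y + l • c) ≤ r := calc
    dist (y + (l % q) • c) (y + l • c) = ‖(l / q) • q • c‖ := by
      rw [dist_add_left, hdecomp, dist_self_add_right]
    _ ≤ (l / q : ℕ) * ‖q • c‖ := norm_nsmul_le
    _ ≤ K * ‖q • c‖ := by gcongr; exact_mod_cast ((Nat.div_lt_iff_lt_mul hq).2 hl).le
    _ ≤ r := hr
  calc dist (y + (l % q) • c) x
      ≤ dist (y + (l % q) • c) (y + l • c) + dist (y + l • c) x := dist_triangle _ _ _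
    _ < 2 * r := by linarith

theorem measure_biUnion_preimage_iterate_add_le {G : Type*} [MeasurableSpace G] [AddGroup G]
    [MeasurableAdd G] (μ : Measure G) [μ.IsAddRightInvariant] (c : G) (N : ℕ) (s : Set G) :
    μ (⋃ l ∈ Finset.range N, (· + c)^[l] ⁻¹' s) ≤ N * μ s :=
  calc μ (⋃ l ∈ Finset.range N, (· + c)^[l] ⁻¹' s)
      ≤ ∑ l ∈ Finset.range N, μ ((· + c)^[l] ⁻¹' s) := measure_biUnion_finset_le _ _
    _ = N * μ s := by simp [add_right_iterate, measure_preimage_add_right]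

theorem AddCircle.volume_pi_ball_le {ι : Type*} [Fintype ι] {T : ℝ} [Fact (0 < T)]
    (x : ι → AddCircle T) {r : ℝ} (hr : 0 ≤ r) :
    volume (ball x r) ≤ ENNReal.ofReal ((2 * r) ^ Fintype.card ι) :=
  calc volume (ball x r) ≤ volume (closedBall x r) := measure_mono ball_subset_closedBall
    _ = ∏ i, volume (closedBall (x i) r) := volume_pi_closedBall x hr
    _ ≤ ∏ _i : ι, ENNReal.ofReal (2 * r) := by
      gcongr with i
      rw [AddCircle.volume_closedBall]
      exact ENNReal.ofReal_le_ofReal (min_le_right _ _)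
    _ = ENNReal.ofReal ((2 * r) ^ Fintype.card ι) := by
      rw [Finset.prod_const, Finset.card_univ, ENNReal.ofReal_pow (by positivity)]

theorem pow_mul_one_div_pow_add_three_le {a b : ℝ} (ha : 1 ≤ a) (hb : 0 < b) (k : ℕ) (s : ℝ) :
    a ^ k * (1 / (a ^ (k + 3) * b ^ (1 / s))) ≤ a ^ (-(2:ℝ)) * b ^ (-1 / s) := by
  have ha0 : 0 < a := one_pos.trans_le ha
  have hbs : 0 < b ^ (1 / s) := Real.rpow_pos_of_pos hb _
  calc a ^ k * (1 / (a ^ (k + 3) * b ^ (1 / s))) = 1 / (a ^ 3 * b ^ (1 / s)) := by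
        field_simp; ring
    _ ≤ 1 / (a ^ 2 * b ^ (1 / s)) := by gcongr; norm_num
    _ = a ^ (-(2:ℝ)) * b ^ (-1 / s) := by
        rw [neg_div, Real.rpow_neg ha0.le, Real.rpow_neg hb.le, Real.rpow_two]; field_simp

theorem mul_mul_rpow_neg_two_mul_rpow_pow {a b : ℝ} (ha : 0 ≤ a) (hb : 0 < b) {d : ℕ} (hd : d ≠ 0)
    (c : ℝ) : b * (c * (a ^ (-(2:ℝ)) * b ^ (-1 / (d:ℝ)))) ^ d = c ^ d / a ^ (2 * d) := by
  have hA : (a ^ (-(2:ℝ))) ^ d = (a ^ (2 * d))⁻¹ := by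
    rw [← Real.rpow_natCast, ← Real.rpow_mul ha, ← Real.rpow_natCast a, ← Real.rpow_neg ha]
    push_cast; ring_nf
  have hB : (b ^ (-1 / (d:ℝ))) ^ d = b⁻¹ := by
    rw [← Real.rpow_natCast, ← Real.rpow_mul hb.le, div_mul_cancel₀ _ (by exact_mod_cast hd),
      Real.rpow_neg_one]
  rw [mul_pow, mul_pow, hA, hB]
  field_simp

/-- Section 2.4 estimate: the union of the first `U_n = n^{2d}Q_n` preimages of the ball of
radius `R_n = n^{-2}Q_n^{-1/d}` is contained in the union of the first `Q_n` preimages of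
the doubled ball, hence has measure at most `C/n^{2d}`. -/
theorem stmt14 (d : ℕ) (hd : 0 < d) :
    ∃ C : ℝ, 0 < C ∧ ∀ α : Fin d → ℝ, ∀ Q : ℕ → ℕ, (∀ n, 1 ≤ Q n) →
      (∀ n, 1 ≤ n → 2 * Q n ≤ Q (n+1)) →
      (∀ n, 1 ≤ n → normZ (fun i => (Q n : ℝ) * α i) ≤
        1 / ((n : ℝ)^(2*d+3) * (Q n : ℝ) ^ ((1:ℝ)/(d:ℝ)))) →
      ∀ x₀ : Fin d → AddCircle (1:ℝ), ∀ n : ℕ, 1 ≤ n →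
        ((⋃ l ∈ Finset.range (n^(2*d) * Q n),
            (fun y => y + fun i => ((α i : ℝ) : AddCircle (1:ℝ)))^[l] ⁻¹'
              ball x₀ ((n : ℝ)^(-(2:ℝ)) * (Q n : ℝ) ^ (-(1:ℝ)/(d:ℝ)))) ⊆
          ⋃ l ∈ Finset.range (Q n),
            (fun y => y + fun i => ((α i : ℝ) : AddCircle (1:ℝ)))^[l] ⁻¹'
              ball x₀ (2 * ((n : ℝ)^(-(2:ℝ)) * (Q n : ℝ) ^ (-(1:ℝ)/(d:ℝ))))) ∧
        volume (⋃ l ∈ Finset.range (n^(2*d) * Q n),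
            (fun y => y + fun i => ((α i : ℝ) : AddCircle (1:ℝ)))^[l] ⁻¹'
              ball x₀ ((n : ℝ)^(-(2:ℝ)) * (Q n : ℝ) ^ (-(1:ℝ)/(d:ℝ))))
          ≤ ENNReal.ofReal (C / (n : ℝ)^(2*d)) := by
  refine ⟨4 ^ d, by positivity, fun α Q hQ _ hQα x₀ n hn => ?_⟩
  set c : Fin d → AddCircle (1:ℝ) := fun i => ((α i : ℝ) : AddCircle (1:ℝ))
  set R := (n : ℝ) ^ (-(2:ℝ)) * (Q n : ℝ) ^ (-(1:ℝ) / (d:ℝ))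
  have hn' : (1:ℝ) ≤ n := by exact_mod_cast hn
  have hQ' : (0:ℝ) < Q n := by exact_mod_cast hQ n
  have hshift : ((n ^ (2 * d) : ℕ) : ℝ) * ‖Q n • c‖ ≤ R := by
    rw [norm_nsmul_coe_eq_normZ]
    push_cast
    exact (mul_le_mul_of_nonneg_left (hQα n hn) (by positivity)).trans
      (pow_mul_one_div_pow_add_three_le hn' hQ' _ _)
  have hincl := biUnion_preimage_ball_iterate_add_subset c x₀ (hQ n) hshift
  refine ⟨hincl, ?_⟩
  calc volume (⋃ l ∈ Finset.range (n ^ (2 * d) * Q n), (· + c)^[l] ⁻¹' ball x₀ R)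
      ≤ volume (⋃ l ∈ Finset.range (Q n), (· + c)^[l] ⁻¹' ball x₀ (2 * R)) := measure_mono hincl
    _ ≤ Q n * volume (ball x₀ (2 * R)) := measure_biUnion_preimage_iterate_add_le _ _ _ _
    _ ≤ ENNReal.ofReal (Q n) * ENNReal.ofReal ((4 * R) ^ d) := by
      rw [ENNReal.ofReal_natCast, show 4 * R = 2 * (2 * R) by ring]
      gcongr
      simpa using AddCircle.volume_pi_ball_le x₀ (by positivity : 0 ≤ 2 * R)
    _ = ENNReal.ofReal (4 ^ d / (n : ℝ) ^ (2 * d)) := by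
      rw [← ENNReal.ofReal_mul hQ'.le, mul_mul_rpow_neg_two_mul_rpow_pow (by positivity) hQ' hd.ne']
end

section
/- For any irrational real number α and any x₀ ∈ T¹, there exists a sequence of radii r_n ≥ 0 with ∑ r_n = ∞ such that the set of x ∈ T¹ with x + nα ∈ B(x₀, r_n) for infinitely many n is empty. -/
open MeasureTheory Filter Metric ENNReal Topology

open Set Function

/-! The multiples of an irrational rotation are dense, so there are times `m k` with
`‖m k • α‖ ∈ (1/(k+3), 1/(k+2))`. Take `r n = ‖n • α‖` at these times and `r n = 0` otherwise:
the radii dominate the harmonic series. A hit at time `n` means `‖x + n • α - x₀‖ < ‖n • α‖`,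
which is impossible for `x = x₀` and forces `‖x - x₀‖ < 2 ‖n • α‖` otherwise; as `‖m k • α‖ → 0`,
a point `x ≠ x₀` is hit only finitely often. -/

namespace AddCircle

theorem exists_norm_nsmul_mem_Ioo {p α a b : ℝ} (hα : Irrational (α / p)) (ha : 0 ≤ a)
    (hab : a < b) (hb : b ≤ |p| / 2) : ∃ n : ℕ, ‖n • (α : AddCircle p)‖ ∈ Ioo a b := by
  have hp : p ≠ 0 := by rintro rfl; simp at hα
  have hU : IsOpen ((‖·‖) ⁻¹' Ioo a b : Set (AddCircle p)) := isOpen_Ioo.preimage continuous_norm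
  have hmid : (((a + b) / 2 : ℝ) : AddCircle p) ∈ (‖·‖) ⁻¹' Ioo a b := by
    have h0 : 0 ≤ (a + b) / 2 := by linarith
    rw [mem_preimage, (norm_coe_eq_abs_iff p hp).2 (by rw [abs_of_nonneg h0]; linarith),
      abs_of_nonneg h0]
    constructor <;> linarith
  obtain ⟨z, hz⟩ := (denseRange_zsmul_coe_iff.2 hα).exists_mem_open hU ⟨_, hmid⟩
  exact ⟨z.natAbs, by rwa [mem_preimage, ← norm_natAbs_smul] at hz⟩

theorem exists_injective_norm_nsmul_tendsto_zero_not_summable {p α : ℝ}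
    (hα : Irrational (α / p)) :
    ∃ m : ℕ → ℕ, Injective m ∧ Tendsto (fun k ↦ ‖m k • (α : AddCircle p)‖) atTop (𝓝 0) ∧
      ¬ Summable (fun k ↦ ‖m k • (α : AddCircle p)‖) := by
  have hp : 0 < |p| := abs_pos.2 (by rintro rfl; simp at hα)
  have hIoo (k : ℕ) : ∃ n : ℕ, ‖n • (α : AddCircle p)‖ ∈ Ioo (|p| / (k + 3)) (|p| / (k + 2)) :=
    exists_norm_nsmul_mem_Ioo hα (by positivity)
      (div_lt_div_of_pos_left hp (by positivity) (by linarith))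
      (div_le_div_of_nonneg_left hp.le (by norm_num) (by simp))
  choose m hm using hIoo
  -- the intervals are disjoint and decreasing, so the times `m k` are distinct
  have hanti : StrictAnti (fun k ↦ ‖m k • (α : AddCircle p)‖) := by
    refine strictAnti_nat_of_succ_lt fun k ↦ ((hm (k + 1)).2.trans_le (le_of_eq ?_)).trans (hm k).1
    push_cast; ring_nf
  refine ⟨m, Injective.of_comp (f := fun n : ℕ ↦ ‖n • (α : AddCircle p)‖) hanti.injective, ?_, ?_⟩
  · refine squeeze_zero (fun _ ↦ norm_nonneg _) (fun k ↦ (hm k).2.le) ?_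
    simpa using (tendsto_add_atTop_iff_nat 2).2 (tendsto_const_div_atTop_nhds_zero_nat |p|)
  · intro hsum
    have hlow : Summable (fun k : ℕ ↦ |p| / ((k + 3 : ℕ) : ℝ)) :=
      hsum.of_nonneg_of_le (fun _ ↦ by positivity) fun k ↦ by exact_mod_cast (hm k).1.le
    rw [summable_nat_add_iff 3 (f := fun n : ℕ ↦ |p| / (n : ℝ))] at hlow
    simp_rw [div_eq_mul_inv] at hlow
    exact Real.not_summable_natCast_inv ((summable_mul_left_iff hp.ne').1 hlow)

end AddCircle

theorem setOf_frequently_add_mem_ball_indicator_eq_empty {G : Type*} [NormedAddCommGroup G]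
    (v : ℕ → G) (x₀ : G) {m : ℕ → ℕ} (hm : Tendsto (fun k ↦ ‖v (m k)‖) atTop (𝓝 0)) :
    {x | ∃ᶠ n in atTop, x + v n ∈ ball x₀ ((range m).indicator (‖v ·‖) n)} = ∅ := by
  refine eq_empty_of_forall_notMem fun x hfreq ↦ ?_
  rcases eq_or_ne x x₀ with rfl | hx
  · obtain ⟨n, hn⟩ := hfreq.exists
    rw [mem_ball, dist_eq_norm, add_sub_cancel_left] at hn
    exact hn.not_ge (indicator_le_self' (fun _ _ ↦ norm_nonneg _) n)
  have hfin : {k | ‖x - x₀‖ / 2 ≤ ‖v (m k)‖}.Finite := by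
    have := hm.eventually (gt_mem_nhds (half_pos (norm_pos_iff.2 (sub_ne_zero.2 hx))))
    simpa [← Nat.cofinite_eq_atTop] using this
  refine Nat.frequently_atTop_iff_infinite.1 hfreq ((hfin.image m).subset ?_)
  intro n hn
  by_cases hnm : n ∈ range m
  · obtain ⟨k, rfl⟩ := hnm
    rw [mem_ofPred_eq, mem_ball, indicator_of_mem (mem_range_self k), dist_eq_norm] at hn
    refine ⟨k, ?_, rfl⟩
    have := norm_sub_le (x + v (m k) - x₀) (v (m k))
    rw [sub_right_comm, add_sub_cancel_right] at this
    show ‖x - x₀‖ / 2 ≤ ‖v (m k)‖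
    linarith
  · rw [mem_ofPred_eq, mem_ball, indicator_of_notMem hnm] at hn
    exact absurd hn dist_nonneg.not_gt

/-- For any irrational rotation of the circle and any center, there are radii with
`∑ rₙ = ∞` such that no point hits the shrinking target infinitely often. -/
theorem stmt17 (α : ℝ) (hα : Irrational α) (x₀ : AddCircle (1:ℝ)) :
    ∃ r : ℕ → ℝ, (∀ n, 0 ≤ r n) ∧ ¬ Summable r ∧
      {x : AddCircle (1:ℝ) |
        ∃ᶠ n in atTop, x + n • ((α : AddCircle (1:ℝ))) ∈ ball x₀ (r n)} = ∅ := by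
  obtain ⟨m, hm, hlim, hsum⟩ :=
    AddCircle.exists_injective_norm_nsmul_tendsto_zero_not_summable (p := 1) (by simpa using hα)
  refine ⟨(range m).indicator (fun n ↦ ‖n • (α : AddCircle (1:ℝ))‖),
    fun n ↦ indicator_nonneg (fun _ _ ↦ norm_nonneg _) n, ?_,
    setOf_frequently_add_mem_ball_indicator_eq_empty _ x₀ hlim⟩
  rwa [← hm.summable_iff (fun n hn ↦ indicator_of_notMem hn _), comp_def,
    funext fun k ↦ indicator_of_mem (mem_range_self k) _]
end
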